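/- Let Z be a collection of subsets of a finite set E and r an integer-valued function on Z. Then Z is the collection of cyclic flats of a matroid on E with rank function restricting to r on Z if and only if: (Z0) Z is a lattice under inclusion; (Z1) r of the minimum element of Z is 0; (Z2) 0 < r(Y) − r(X) < |Y − X| for all X, Y in Z with X properly contained in Y; (Z3) for all X, Y in Z, r(X) + r(Y) ≥ r(X ∨ Y) + r(X ∧ Y) + |(X ∩ Y) − (X ∧ Y)|. -/

import Mathlib

open Set

namespace Matroid

variable {α : Type*}

/-- A circuit is a minimal dependent set. -/
def Circuit (M : Matroid α) (C : Set α) : Prop := Minimal M.Dep C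

/-- The rank of a set: the supremum of sizes of independent subsets. -/
noncomputable def rk (M : Matroid α) (X : Set α) : ℕ :=
  sSup {n | ∃ I, I ⊆ X ∧ M.Indep I ∧ I.ncard = n}

/-- A Hamiltonian flat is a flat with a spanning circuit. -/
def HamFlat (M : Matroid α) (F : Set α) : Prop :=
  M.IsFlat F ∧ ∃ C, M.Circuit C ∧ C ⊆ F ∧ M.closure C = F

/-- `M` is `k`-closure-laminar if the Hamiltonian flats containing any given
`k`-element independent set form a chain under inclusion. -/
def KClosureLaminar (M : Matroid α) (k : ℕ) : Prop :=
  ∀ X ⊆ M.E, M.Indep X → X.ncard = k →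
    IsChain (· ⊆ ·) {F | M.HamFlat F ∧ X ⊆ F}

/-- `M` is `k`-laminar if whenever two circuits meet in at least `k` elements,
one is contained in the closure of the other. -/
def KLaminar (M : Matroid α) (k : ℕ) : Prop :=
  ∀ C₁ C₂, M.Circuit C₁ → M.Circuit C₂ → k ≤ (C₁ ∩ C₂).ncard →
    C₁ ⊆ M.closure C₂ ∨ C₂ ⊆ M.closure C₁

/-- Deletion of a set of elements. -/
def delete' (M : Matroid α) (D : Set α) : Matroid α := M.restrict (M.E \ D)

/-- Contraction of a set of elements, defined via duality. -/
def contract' (M : Matroid α) (C : Set α) : Matroid α := (M✶.delete' C)✶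

end Matroid

/-- A cyclic flat of a matroid: a flat that is a union of circuits. -/
def Matroid.CyclicFlat {α : Type*} (M : Matroid α) (F : Set α) : Prop :=
  M.IsFlat F ∧ ∀ x ∈ F, ∃ C, M.Circuit C ∧ x ∈ C ∧ C ⊆ F

/-! ### Auxiliary lemmas -/

namespace Matroid

variable {M : Matroid α} {I J A C D F W : Set α} {e x y : α}

lemma closure_flat' (M : Matroid α) (X : Set α) : M.IsFlat (M.closure X) := by
  rw [closure_def]
  have hne : Nonempty {F | M.IsFlat F ∧ X ∩ M.E ⊆ F} :=
    ⟨⟨M.E, M.ground_isFlat, inter_subset_right⟩⟩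
  have : ⋂₀ {F | M.IsFlat F ∧ X ∩ M.E ⊆ F} = ⋂ (F : {F | M.IsFlat F ∧ X ∩ M.E ⊆ F}), F.1 := by
    rw [sInter_eq_iInter]
  rw [this]
  exact IsFlat.iInter fun F ↦ F.2.1

lemma rk_basis (hE : M.E.Finite) (hI : M.IsBasis I X) : M.rk X = I.ncard := by
  have hgreat : IsGreatest {n | ∃ I, I ⊆ X ∧ M.Indep I ∧ I.ncard = n} I.ncard := by
    constructor
    · exact ⟨I, hI.subset, hI.indep, rfl⟩
    · rintro n ⟨J, hJX, hJ, rfl⟩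
      obtain ⟨J', hJ', hJJ'⟩ := hJ.subset_isBasis_of_subset hJX hI.subset_ground
      have hcard := hJ'.encard_eq_encard hI
      have hJ'fin : J'.Finite := hE.subset (hJ'.indep.subset_ground)
      have : J'.ncard = I.ncard := by
        rw [Set.ncard_def, hcard, ← Set.ncard_def]
      exact this ▸ Set.ncard_le_ncard hJJ' hJ'fin
  exact hgreat.csSup_eq

lemma indep_ncard_le_rk (hE : M.E.Finite) (hJ : M.Indep J) (hJX : J ⊆ X) (hX : X ⊆ M.E) :
    J.ncard ≤ M.rk X := by
  obtain ⟨I, hI⟩ := M.exists_isBasis X hX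
  rw [rk_basis hE hI]
  obtain ⟨J', hJ', hJJ'⟩ := hJ.subset_isBasis_of_subset hJX hX
  have hcard := hJ'.encard_eq_encard hI
  have : J'.ncard = I.ncard := by rw [Set.ncard_def, hcard, ← Set.ncard_def]
  exact this ▸ Set.ncard_le_ncard hJJ' (hE.subset hJ'.indep.subset_ground)

lemma rk_mono' (hE : M.E.Finite) (hXY : X ⊆ Y) (hY : Y ⊆ M.E) : M.rk X ≤ M.rk Y := by
  obtain ⟨I, hI⟩ := M.exists_isBasis X (hXY.trans hY)
  rw [rk_basis hE hI]
  exact indep_ncard_le_rk hE hI.indep (hI.subset.trans hXY) hY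

lemma rk_closure' (hE : M.E.Finite) (hX : X ⊆ M.E) : M.rk (M.closure X) = M.rk X := by
  obtain ⟨I, hI⟩ := M.exists_isBasis X hX
  rw [rk_basis hE hI, rk_basis hE hI.isBasis_closure_right]

lemma exists_circuit_aux (hE : M.E.Finite) :
    ∀ n (D : Set α), D.ncard = n → M.Dep D → ∃ C, M.Circuit C ∧ C ⊆ D := by
  intro n
  induction n using Nat.strong_induction_on with
  | _ n ih =>
    intro D hn hD
    have hDfin : D.Finite := hE.subset hD.subset_ground
    by_cases hmin : Minimal M.Dep D
    · exact ⟨D, hmin, Subset.rfl⟩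
    · simp only [Minimal, hD, true_and, not_forall] at hmin
      obtain ⟨D', hD', hD'D, hDD'⟩ := hmin
      have hss : D' ⊂ D := ssubset_of_subset_not_subset hD'D hDD'
      have hlt : D'.ncard < n := hn ▸ Set.ncard_lt_ncard hss hDfin
      obtain ⟨C, hC, hCD'⟩ := ih _ hlt D' rfl hD'
      exact ⟨C, hC, hCD'.trans hD'D⟩

lemma Dep.exists_circuit_subset (hE : M.E.Finite) (hD : M.Dep D) :
    ∃ C, M.Circuit C ∧ C ⊆ D :=
  exists_circuit_aux hE _ D rfl hD

lemma Circuit.dep (hC : M.Circuit C) : M.Dep C := hC.prop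

lemma Circuit.ssubset_indep (hC : M.Circuit C) (hX : X ⊂ C) : M.Indep X := by
  rw [← not_dep_iff (hX.subset.trans hC.dep.subset_ground)]
  exact fun hX' ↦ hX.not_subset (hC.2 hX' hX.subset)

lemma Circuit.diff_singleton_indep (hC : M.Circuit C) (he : e ∈ C) : M.Indep (C \ {e}) :=
  hC.ssubset_indep (sdiff_singleton_ssubset.2 he)

lemma Circuit.mem_closure_diff_singleton (hC : M.Circuit C) (he : e ∈ C) :
    e ∈ M.closure (C \ {e}) := by
  have hI := hC.diff_singleton_indep he
  have hdep : M.Dep (insert e (C \ {e})) := by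
    rw [insert_diff_singleton, insert_eq_of_mem he]; exact hC.dep
  exact ((hI.insert_dep_iff).1 hdep).1

lemma Indep.exists_circuit_of_mem_closure (hE : M.E.Finite) (hI : M.Indep I)
    (he : e ∈ M.closure I) (heI : e ∉ I) :
    ∃ C, M.Circuit C ∧ e ∈ C ∧ C ⊆ insert e I := by
  have hdep : M.Dep (insert e I) := hI.insert_dep_iff.2 ⟨he, heI⟩
  obtain ⟨C, hC, hCI⟩ := hdep.exists_circuit_subset hE
  refine ⟨C, hC, ?_, hCI⟩
  by_contra heC
  exact hC.dep.not_indep (hI.subset fun x hx ↦ by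
    rcases hCI hx with h | h
    · exact absurd (h ▸ hx) heC
    · exact h)

-- new part
lemma flat_of_closure_subset (h : M.closure F ⊆ F) (hF : F ⊆ M.E) : M.IsFlat F := by
  refine ⟨fun I X hIF hIX ↦ ?_, hF⟩
  exact hIX.subset_closure.trans (hIF.closure_eq_closure ▸ h)

lemma IsFlat.inter' (hX : M.IsFlat X) (hY : M.IsFlat Y) : M.IsFlat (X ∩ Y) := by
  refine flat_of_closure_subset ?_ (inter_subset_left.trans hX.subset_ground)
  exact subset_inter
    ((M.closure_subset_closure inter_subset_left).trans hX.closure.subset)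
    ((M.closure_subset_closure inter_subset_right).trans hY.closure.subset)

/-- The cyclic core of a set: elements lying in a circuit inside the set. -/
def coreOf (M : Matroid α) (A : Set α) : Set α :=
  {x | x ∈ A ∧ ∃ C, M.Circuit C ∧ x ∈ C ∧ C ⊆ A}

lemma coreOf_subset (M : Matroid α) (A : Set α) : M.coreOf A ⊆ A := fun _ h ↦ h.1

lemma rk_empty (hE : M.E.Finite) : M.rk ∅ = 0 := by
  obtain ⟨I, hI⟩ := M.exists_isBasis ∅ (empty_subset _)
  rw [rk_basis hE hI, Set.ncard_eq_zero (hE.subset hI.indep.subset_ground)]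
  exact subset_empty_iff.1 hI.subset

lemma rk_le_rk_add_diff (hE : M.E.Finite) (hA : A ⊆ M.E) (hX : X ⊆ M.E) :
    M.rk A ≤ M.rk X + (A \ X).ncard := by
  obtain ⟨J, hJ⟩ := M.exists_isBasis A hA
  rw [rk_basis hE hJ]
  have hJfin : J.Finite := hE.subset hJ.indep.subset_ground
  calc J.ncard = ((J ∩ X) ∪ (J \ X)).ncard := by rw [inter_union_diff]
    _ ≤ (J ∩ X).ncard + (J \ X).ncard := Set.ncard_union_le _ _
    _ ≤ M.rk X + (A \ X).ncard := by
        refine add_le_add (indep_ncard_le_rk hE (hJ.indep.subset inter_subset_left)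
          inter_subset_right hX) (Set.ncard_le_ncard ?_ ((hE.subset hA).diff))
        exact diff_subset_diff_left hJ.subset

lemma rk_diff_singleton_of_mem_closure (hE : M.E.Finite) (hA : A ⊆ M.E) (hx : x ∈ A)
    (h : x ∈ M.closure (A \ {x})) : M.rk (A \ {x}) = M.rk A := by
  obtain ⟨I, hI⟩ := M.exists_isBasis (A \ {x}) (diff_subset.trans hA)
  have hIA : M.IsBasis I A := by
    rw [isBasis_iff_indep_closure]
    refine ⟨hI.indep, fun y hy ↦ ?_, hI.subset.trans diff_subset⟩
    rcases eq_or_ne y x with rfl | hne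
    · rwa [hI.closure_eq_closure]
    · exact (hI.subset_closure) ⟨hy, hne⟩
  rw [rk_basis hE hI, rk_basis hE hIA]

lemma rk_submod (hE : M.E.Finite) (hX : X ⊆ M.E) (hY : Y ⊆ M.E) :
    M.rk (X ∪ Y) + M.rk (X ∩ Y) ≤ M.rk X + M.rk Y := by
  obtain ⟨I, hI⟩ := M.exists_isBasis (X ∩ Y) (inter_subset_left.trans hX)
  obtain ⟨J, hJ, hJI⟩ := hI.exists_isBasis_inter_eq_of_superset
    (Y := X ∪ Y) (inter_subset_left.trans subset_union_left) (union_subset hX hY)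
  have hJfin : J.Finite := hE.subset hJ.indep.subset_ground
  rw [rk_basis hE hI, rk_basis hE hJ]
  have h1 : (J ∩ X).ncard ≤ M.rk X :=
    indep_ncard_le_rk hE (hJ.indep.subset inter_subset_left) inter_subset_right hX
  have h2 : (J ∩ Y).ncard ≤ M.rk Y :=
    indep_ncard_le_rk hE (hJ.indep.subset inter_subset_left) inter_subset_right hY
  have hu : (J ∩ X) ∪ (J ∩ Y) = J := by
    rw [← inter_union_distrib_left, inter_eq_self_of_subset_left hJ.subset]
  have hi : (J ∩ X) ∩ (J ∩ Y) = I := by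
    rw [← hJI]; ext z; simp [mem_inter_iff]; tauto
  have := Set.ncard_union_add_ncard_inter (J ∩ X) (J ∩ Y)
    (hJfin.subset inter_subset_left) (hJfin.subset inter_subset_left)
  rw [hu, hi] at this
  omega

-- the set of loops is a cyclic flat
lemma cyclicFlat_loops (hE : M.E.Finite) : M.CyclicFlat (M.closure ∅) := by
  refine ⟨closure_flat' M ∅, fun x hx ↦ ?_⟩
  have hdep : M.Dep {x} := by
    have := (M.empty_indep.mem_closure_iff).1 hx
    simpa using this
  obtain ⟨C, hC, hCx⟩ := hdep.exists_circuit_subset hE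
  have hCne : C.Nonempty := by
    rcases C.eq_empty_or_nonempty with rfl | h
    · exact absurd M.empty_indep hC.dep.not_indep
    · exact h
  have hCeq : C = {x} := hCne.subset_singleton_iff.1 hCx
  refine ⟨C, hC, by simp [hCeq], ?_⟩
  rw [hCeq]; exact singleton_subset_iff.2 hx

lemma cyclicFlat_join (hE : M.E.Finite) (hX : M.CyclicFlat X) (hY : M.CyclicFlat Y) :
    M.CyclicFlat (M.closure (X ∪ Y)) := by
  have hXE := hX.1.subset_ground
  have hYE := hY.1.subset_ground
  have hXYE : X ∪ Y ⊆ M.E := union_subset hXE hYE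
  have hsub : X ∪ Y ⊆ M.closure (X ∪ Y) := M.subset_closure _ hXYE
  refine ⟨closure_flat' M _, fun x hx ↦ ?_⟩
  by_cases hxXY : x ∈ X ∪ Y
  · rcases hxXY with h | h
    · obtain ⟨C, hC, hxC, hCX⟩ := hX.2 x h
      exact ⟨C, hC, hxC, hCX.trans (subset_union_left.trans hsub)⟩
    · obtain ⟨C, hC, hxC, hCY⟩ := hY.2 x h
      exact ⟨C, hC, hxC, hCY.trans (subset_union_right.trans hsub)⟩
  · obtain ⟨I, hI⟩ := M.exists_isBasis (X ∪ Y) hXYE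
    have hxI : x ∈ M.closure I := by rwa [hI.closure_eq_closure]
    have hxnI : x ∉ I := fun h ↦ hxXY (hI.subset h)
    obtain ⟨C, hC, hxC, hCI⟩ := hI.indep.exists_circuit_of_mem_closure hE hxI hxnI
    exact ⟨C, hC, hxC, hCI.trans (insert_subset hx (hI.subset.trans hsub))⟩

lemma cyclicFlat_coreOf (hE : M.E.Finite) (hA : M.IsFlat A) : M.CyclicFlat (M.coreOf A) := by
  set D := M.coreOf A with hD
  have hDA : D ⊆ A := M.coreOf_subset A
  have hDE : D ⊆ M.E := hDA.trans hA.subset_ground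
  refine ⟨flat_of_closure_subset ?_ hDE, fun x hx ↦ ?_⟩
  case refine_2 =>
    obtain ⟨hxA, C, hC, hxC, hCA⟩ := hx
    exact ⟨C, hC, hxC, fun y hy ↦ ⟨hCA hy, C, hC, hy, hCA⟩⟩
  -- closure D ⊆ D
  intro e he
  have heA : e ∈ A := by
    have : M.closure D ⊆ A := hA.closure ▸ M.closure_subset_closure hDA
    exact this he
  by_contra heD
  obtain ⟨I, hI⟩ := M.exists_isBasis D hDE
  have heI : e ∈ M.closure I := by rwa [hI.closure_eq_closure]
  have henI : e ∉ I := fun h ↦ heD (hI.subset h)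
  obtain ⟨C, hC, heC, hCI⟩ := hI.indep.exists_circuit_of_mem_closure hE heI henI
  have hCA : C ⊆ A := hCI.trans (insert_subset heA (hI.subset.trans hDA))
  exact heD ⟨heA, C, hC, heC, hCA⟩

lemma coreOf_greatest (hW : M.CyclicFlat Y) (hYA : Y ⊆ A) : Y ⊆ M.coreOf A := by
  intro x hx
  obtain ⟨C, hC, hxC, hCY⟩ := hW.2 x hx
  exact ⟨hYA hx, C, hC, hxC, hCY.trans hYA⟩

lemma rk_core_aux (hE : M.E.Finite) :
    ∀ n (A : Set α), (A \ M.coreOf A).ncard = n → A ⊆ M.E →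
      M.rk A = M.rk (M.coreOf A) + (A \ M.coreOf A).ncard := by
  intro n
  induction n using Nat.strong_induction_on with
  | _ n ih =>
    intro A hn hA
    have hAfin : A.Finite := hE.subset hA
    rcases (A \ M.coreOf A).eq_empty_or_nonempty with hemp | ⟨x, hx⟩
    · have : M.coreOf A = A := (M.coreOf_subset A).antisymm (by
        intro a ha
        by_contra h
        exact (eq_empty_iff_forall_notMem.1 hemp a) ⟨ha, h⟩)
      rw [hemp, this]; simp
    · -- x ∈ A, not in core
      have hx1 : x ∈ A := hx.1
      have hx2 : x ∉ M.coreOf A := hx.2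
      have hAx : A \ {x} ⊆ M.E := diff_subset.trans hA
      -- x not in closure of A \ {x}
      have hxcl : x ∉ M.closure (A \ {x}) := by
        intro h
        obtain ⟨I, hI⟩ := M.exists_isBasis (A \ {x}) hAx
        have hxI : x ∈ M.closure I := by rwa [hI.closure_eq_closure]
        have hxnI : x ∉ I := fun hh ↦ (hI.subset hh).2 rfl
        obtain ⟨C, hC, hxC, hCI⟩ := hI.indep.exists_circuit_of_mem_closure hE hxI hxnI
        have hCA : C ⊆ A := hCI.trans (insert_subset hx1 (hI.subset.trans diff_subset))
        exact hx2 ⟨hx1, C, hC, hxC, hCA⟩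
      -- rank grows by one
      obtain ⟨I, hI⟩ := M.exists_isBasis (A \ {x}) hAx
      have hxclI : x ∉ M.closure I := by rwa [hI.closure_eq_closure]
      have hxnI : x ∉ I := fun hh ↦ (hI.subset hh).2 rfl
      have hxE : x ∈ M.E := hA hx1
      have hins : M.Indep (insert x I) := by
        rw [hI.indep.insert_indep_iff_of_notMem hxnI]
        exact ⟨hxE, hxclI⟩
      have hbasis : M.IsBasis (insert x I) A := by
        rw [isBasis_iff_indep_closure]
        refine ⟨hins, fun y hy ↦ ?_, insert_subset hx1 (hI.subset.trans diff_subset)⟩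
        rcases eq_or_ne y x with rfl | hne
        · exact M.mem_closure_of_mem (mem_insert _ _) hins.subset_ground
        · exact (M.closure_subset_closure (subset_insert x I)) (hI.subset_closure ⟨hy, hne⟩)
      have hrk : M.rk A = M.rk (A \ {x}) + 1 := by
        rw [rk_basis hE hI, rk_basis hE hbasis,
          Set.ncard_insert_of_notMem hxnI (hE.subset hI.indep.subset_ground)]
      -- cores agree
      have hcore : M.coreOf (A \ {x}) = M.coreOf A := by
        ext y
        constructor
        · rintro ⟨hy, C, hC, hyC, hCA⟩
          exact ⟨hy.1, C, hC, hyC, hCA.trans diff_subset⟩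
        · rintro ⟨hy, C, hC, hyC, hCA⟩
          have hxC : x ∉ C := fun hh ↦ hx2 ⟨hx1, C, hC, hh, hCA⟩
          have hCAx : C ⊆ A \ {x} := fun z hz ↦ ⟨hCA hz, fun hzx ↦ hxC (hzx ▸ hz)⟩
          exact ⟨⟨hy, fun hyx ↦ hxC (hyx ▸ hyC)⟩, C, hC, hyC, hCAx⟩
      have hdiffeq : (A \ {x}) \ M.coreOf (A \ {x}) = (A \ M.coreOf A) \ {x} := by
        rw [hcore]; ext z; simp; tauto
      have hxmem : x ∈ A \ M.coreOf A := hx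
      have hnpos : (A \ M.coreOf A).ncard = ((A \ M.coreOf A) \ {x}).ncard + 1 := by
        rw [Set.ncard_diff_singleton_add_one hxmem (hAfin.diff)]
      have hlt : ((A \ {x}) \ M.coreOf (A \ {x})).ncard < n := by
        rw [hdiffeq]; omega
      have := ih _ hlt (A \ {x}) rfl hAx
      rw [hrk, this, hdiffeq, hcore]
      omega
end Matroid

section CFAux

variable {α : Type*}

theorem forward_dir (E : Set α) (hE : E.Finite)
    (Z : Set (Set α)) (hZE : ∀ X ∈ Z, X ⊆ E) (r : Set α → ℤ)
    (h : ∃ M : Matroid α, M.E = E ∧ {F | M.CyclicFlat F} = Z ∧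
        ∀ X ∈ Z, (M.rk X : ℤ) = r X) :
      ((Z.Nonempty ∧
        (∀ X ∈ Z, ∀ Y ∈ Z, ∃ J, IsLeast {W ∈ Z | X ⊆ W ∧ Y ⊆ W} J) ∧
        (∀ X ∈ Z, ∀ Y ∈ Z, ∃ m, IsGreatest {W ∈ Z | W ⊆ X ∧ W ⊆ Y} m)) ∧
      (∀ B, IsLeast Z B → r B = 0) ∧
      (∀ X ∈ Z, ∀ Y ∈ Z, X ⊂ Y →
        0 < r Y - r X ∧ r Y - r X < ((Y \ X).ncard : ℤ)) ∧
      (∀ X ∈ Z, ∀ Y ∈ Z, ∀ J m,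
        IsLeast {W ∈ Z | X ⊆ W ∧ Y ⊆ W} J →
        IsGreatest {W ∈ Z | W ⊆ X ∧ W ⊆ Y} m →
        r X + r Y ≥ r J + r m + (((X ∩ Y) \ m).ncard : ℤ))) := by
  obtain ⟨M, hME, hZmem, hr⟩ := h
  have hE' : M.E.Finite := hME ▸ hE
  have mem : ∀ {X}, X ∈ Z ↔ M.CyclicFlat X := fun {X} ↦ by rw [← hZmem]; rfl
  have hloops : M.closure ∅ ∈ Z := mem.2 (Matroid.cyclicFlat_loops hE')
  refine ⟨⟨⟨_, hloops⟩, ?_, ?_⟩, ?_, ?_, ?_⟩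
  · -- joins
    intro X hX Y hY
    have hXc := mem.1 hX; have hYc := mem.1 hY
    have hXE := hXc.1.subset_ground; have hYE := hYc.1.subset_ground
    refine ⟨M.closure (X ∪ Y), ⟨mem.2 (Matroid.cyclicFlat_join hE' hXc hYc),
      subset_union_left.trans (M.subset_closure _ (union_subset hXE hYE)),
      subset_union_right.trans (M.subset_closure _ (union_subset hXE hYE))⟩, ?_⟩
    rintro W ⟨hWZ, hXW, hYW⟩
    have hWc := mem.1 hWZ
    have : M.closure (X ∪ Y) ⊆ M.closure W := M.closure_subset_closure (union_subset hXW hYW)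
    rwa [hWc.1.closure] at this
  · -- meets
    intro X hX Y hY
    have hXc := mem.1 hX; have hYc := mem.1 hY
    refine ⟨M.coreOf (X ∩ Y), ⟨mem.2 (Matroid.cyclicFlat_coreOf hE' (hXc.1.inter' hYc.1)),
      (M.coreOf_subset _).trans inter_subset_left,
      (M.coreOf_subset _).trans inter_subset_right⟩, ?_⟩
    rintro W ⟨hWZ, hWX, hWY⟩
    exact Matroid.coreOf_greatest (mem.1 hWZ) (subset_inter hWX hWY)
  · -- Z1
    intro B hB
    have hBZ := hB.1
    have hBsub : B ⊆ M.closure ∅ := hB.2 hloops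
    have h1 : M.rk B ≤ M.rk (M.closure ∅) :=
      Matroid.rk_mono' hE' hBsub (M.closure_subset_ground ∅)
    have h2 : M.rk (M.closure ∅) = 0 := by
      rw [Matroid.rk_closure' hE' (empty_subset _), Matroid.rk_empty hE']
    have : M.rk B = 0 := by omega
    have := hr B hBZ
    omega
  · -- Z2
    intro X hX Y hY hXY
    have hXc := mem.1 hX; have hYc := mem.1 hY
    have hXE := hXc.1.subset_ground; have hYE := hYc.1.subset_ground
    obtain ⟨y, hyY, hyX⟩ := exists_of_ssubset hXY
    have hYfin : Y.Finite := hE'.subset hYE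
    -- lower bound : rk X < rk Y
    obtain ⟨I, hI⟩ := M.exists_isBasis X hXE
    have hycl : y ∉ M.closure I := by
      rw [hI.closure_eq_closure, hXc.1.closure]; exact hyX
    have hyI : y ∉ I := fun h ↦ hyX (hI.subset h)
    have hins : M.Indep (insert y I) := by
      rw [hI.indep.insert_indep_iff_of_notMem hyI]
      exact ⟨hYE hyY, hycl⟩
    have hlow : M.rk X < M.rk Y := by
      have h1 : (insert y I).ncard ≤ M.rk Y :=
        Matroid.indep_ncard_le_rk hE' hins
          (insert_subset hyY (hI.subset.trans hXY.subset)) hYE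
      have h2 : (insert y I).ncard = I.ncard + 1 :=
        Set.ncard_insert_of_notMem hyI (hE'.subset hI.indep.subset_ground)
      rw [Matroid.rk_basis hE' hI]
      omega
    -- upper bound
    obtain ⟨C, hC, hyC, hCY⟩ := hYc.2 y hyY
    have hycl2 : y ∈ M.closure (Y \ {y}) := by
      refine M.closure_subset_closure (diff_subset_diff_left hCY) (hC.mem_closure_diff_singleton hyC)
    have hrkY : M.rk (Y \ {y}) = M.rk Y :=
      Matroid.rk_diff_singleton_of_mem_closure hE' hYE hyY hycl2
    have hub : M.rk (Y \ {y}) ≤ M.rk X + ((Y \ {y}) \ X).ncard :=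
      Matroid.rk_le_rk_add_diff hE' (diff_subset.trans hYE) hXE
    have hset : (Y \ {y}) \ X = (Y \ X) \ {y} := by ext z; simp; tauto
    have hcard : ((Y \ X) \ {y}).ncard + 1 = (Y \ X).ncard :=
      Set.ncard_diff_singleton_add_one ⟨hyY, hyX⟩ (hYfin.diff)
    rw [hset] at hub
    have hrX := hr X hX; have hrY := hr Y hY
    constructor
    · omega
    · omega
  · -- Z3
    intro X hX Y hY J m hJ hm
    have hXc := mem.1 hX; have hYc := mem.1 hY
    have hXE := hXc.1.subset_ground; have hYE := hYc.1.subset_ground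
    have hJZ : J ∈ Z := hJ.1.1
    have hmZ : m ∈ Z := hm.1.1
    -- J ⊆ closure (X ∪ Y)
    have hclmem : M.closure (X ∪ Y) ∈ {W ∈ Z | X ⊆ W ∧ Y ⊆ W} :=
      ⟨mem.2 (Matroid.cyclicFlat_join hE' hXc hYc),
        subset_union_left.trans (M.subset_closure _ (union_subset hXE hYE)),
        subset_union_right.trans (M.subset_closure _ (union_subset hXE hYE))⟩
    have hJsub : J ⊆ M.closure (X ∪ Y) := hJ.2 hclmem
    have hrkJ : M.rk J ≤ M.rk (X ∪ Y) := by
      have := Matroid.rk_mono' hE' hJsub (M.closure_subset_ground _)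
      rwa [Matroid.rk_closure' hE' (union_subset hXE hYE)] at this
    -- m = coreOf (X ∩ Y)
    have hmcore : m = M.coreOf (X ∩ Y) := by
      have hcmem : M.coreOf (X ∩ Y) ∈ {W ∈ Z | W ⊆ X ∧ W ⊆ Y} :=
        ⟨mem.2 (Matroid.cyclicFlat_coreOf hE' (hXc.1.inter' hYc.1)),
          (M.coreOf_subset _).trans inter_subset_left,
          (M.coreOf_subset _).trans inter_subset_right⟩
      refine subset_antisymm ?_ (hm.2 hcmem)
      exact Matroid.coreOf_greatest (mem.1 hmZ) (subset_inter hm.1.2.1 hm.1.2.2)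
    have hrkXY : M.rk (X ∩ Y) = M.rk m + ((X ∩ Y) \ m).ncard := by
      rw [hmcore]
      exact Matroid.rk_core_aux hE' _ (X ∩ Y) rfl (inter_subset_left.trans hXE)
    have hsub := Matroid.rk_submod hE' hXE hYE
    have hrX := hr X hX; have hrY := hr Y hY
    have hrJ := hr J hJZ; have hrm := hr m hmZ
    omega

end CFAux

section Construction

variable {α : Type*} {E : Set α} {Z : Set (Set α)} {r : Set α → ℤ} {I J A B F W X Y : Set α} {e x : α}

/-- Independence predicate induced by `(Z, r)`. -/
def Ind (E : Set α) (Z : Set (Set α)) (r : Set α → ℤ) (A : Set α) : Prop :=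
  A ⊆ E ∧ ∀ W ∈ Z, ((A ∩ W).ncard : ℤ) ≤ r W

lemma exists_least_of_meets (hne : Z.Nonempty) (hZfin : Z.Finite)
    (hmeet : ∀ X ∈ Z, ∀ Y ∈ Z, ∃ m, IsGreatest {W ∈ Z | W ⊆ X ∧ W ⊆ Y} m) :
    ∃ B, IsLeast Z B := by
  have key : ∀ S : Set (Set α), S.Finite → S ⊆ Z → ∃ m ∈ Z, ∀ s ∈ S, m ⊆ s := by
    intro S hSfin
    refine Set.Finite.induction_on (motive := fun S _ => S ⊆ Z → ∃ m ∈ Z, ∀ s ∈ S, m ⊆ s)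
      _ hSfin (fun _ ↦ ⟨hne.choose, hne.choose_spec, by simp⟩) ?_
    · intro a S haS hSfin ih hsub
      obtain ⟨m', hm'Z, hm'⟩ := ih (subset_trans (subset_insert a S) hsub)
      obtain ⟨g, hg⟩ := hmeet a (hsub (mem_insert a S)) m' hm'Z
      refine ⟨g, hg.1.1, fun s hs ↦ ?_⟩
      rcases mem_insert_iff.1 hs with rfl | hs
      · exact hg.1.2.1
      · exact hg.1.2.2.trans (hm' s hs)
  obtain ⟨m, hmZ, hm⟩ := key Z hZfin Subset.rfl
  exact ⟨m, hmZ, fun s hs ↦ hm s hs⟩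

lemma r_mono (hZ2 : ∀ X ∈ Z, ∀ Y ∈ Z, X ⊂ Y →
      0 < r Y - r X ∧ r Y - r X < ((Y \ X).ncard : ℤ))
    (hX : X ∈ Z) (hY : Y ∈ Z) (hXY : X ⊆ Y) : r X ≤ r Y := by
  rcases eq_or_ne X Y with rfl | hne
  · exact le_refl _
  · have := (hZ2 X hX Y hY (ssubset_of_subset_of_ne hXY hne)).1
    omega

lemma r_nonneg (hB : IsLeast Z B) (hZ1 : ∀ B', IsLeast Z B' → r B' = 0)
    (hZ2 : ∀ X ∈ Z, ∀ Y ∈ Z, X ⊂ Y → 0 < r Y - r X ∧ r Y - r X < ((Y \ X).ncard : ℤ))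
    (hW : W ∈ Z) : 0 ≤ r W := by
  have h0 := hZ1 B hB
  have := r_mono hZ2 hB.1 hW (hB.2 hW)
  omega

lemma L1s (hE : E.Finite) (hZE : ∀ X ∈ Z, X ⊆ E)
    (hjoin : ∀ X ∈ Z, ∀ Y ∈ Z, ∃ J, IsLeast {W ∈ Z | X ⊆ W ∧ Y ⊆ W} J)
    (hmeet : ∀ X ∈ Z, ∀ Y ∈ Z, ∃ m, IsGreatest {W ∈ Z | W ⊆ X ∧ W ⊆ Y} m)
    (hZ2 : ∀ X ∈ Z, ∀ Y ∈ Z, X ⊂ Y → 0 < r Y - r X ∧ r Y - r X < ((Y \ X).ncard : ℤ))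
    (hZ3 : ∀ X ∈ Z, ∀ Y ∈ Z, ∀ J m, IsLeast {W ∈ Z | X ⊆ W ∧ Y ⊆ W} J →
        IsGreatest {W ∈ Z | W ⊆ X ∧ W ⊆ Y} m →
        r X + r Y ≥ r J + r m + (((X ∩ Y) \ m).ncard : ℤ))
    (hF : F ∈ Z) (hW : W ∈ Z) (hFW : ¬ F ⊆ W) :
    r F + 1 ≤ r W + ((F \ W).ncard : ℤ) := by
  obtain ⟨m, hm⟩ := hmeet F hF W hW
  obtain ⟨Jn, hJn⟩ := hjoin F hF W hW
  have hmZ : m ∈ Z := hm.1.1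
  have hJnZ : Jn ∈ Z := hJn.1.1
  have hmF : m ⊆ F := hm.1.2.1
  have hmW : m ⊆ W := hm.1.2.2
  have hmssF : m ⊂ F := ssubset_of_subset_of_ne hmF (fun h ↦ hFW (h ▸ hmW))
  have h2 := (hZ2 m hmZ F hF hmssF).2
  have h3 := hZ3 F hF W hW Jn m hJn hm
  have hmono := r_mono hZ2 hF hJnZ hJn.1.2.1
  have hFfin : F.Finite := hE.subset (hZE F hF)
  have hsplit : F \ m = (F \ W) ∪ ((F ∩ W) \ m) := by
    ext z
    have hz := @hmW z
    simp only [mem_diff, mem_union, mem_inter_iff]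
    tauto
  have hdisj : Disjoint (F \ W) ((F ∩ W) \ m) := by
    rw [Set.disjoint_left]
    rintro z ⟨_, hzW⟩ ⟨⟨_, hzW'⟩, _⟩
    exact hzW hzW'
  have hcard : (F \ m).ncard = (F \ W).ncard + ((F ∩ W) \ m).ncard := by
    rw [hsplit, Set.ncard_union_eq hdisj (hFfin.diff) ((hFfin.inter_of_left _).diff)]
  omega

lemma L1 (hE : E.Finite) (hZE : ∀ X ∈ Z, X ⊆ E)
    (hjoin : ∀ X ∈ Z, ∀ Y ∈ Z, ∃ J, IsLeast {W ∈ Z | X ⊆ W ∧ Y ⊆ W} J)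
    (hmeet : ∀ X ∈ Z, ∀ Y ∈ Z, ∃ m, IsGreatest {W ∈ Z | W ⊆ X ∧ W ⊆ Y} m)
    (hZ2 : ∀ X ∈ Z, ∀ Y ∈ Z, X ⊂ Y → 0 < r Y - r X ∧ r Y - r X < ((Y \ X).ncard : ℤ))
    (hZ3 : ∀ X ∈ Z, ∀ Y ∈ Z, ∀ J m, IsLeast {W ∈ Z | X ⊆ W ∧ Y ⊆ W} J →
        IsGreatest {W ∈ Z | W ⊆ X ∧ W ⊆ Y} m →
        r X + r Y ≥ r J + r m + (((X ∩ Y) \ m).ncard : ℤ))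
    (hF : F ∈ Z) (hW : W ∈ Z) :
    r F ≤ r W + ((F \ W).ncard : ℤ) := by
  by_cases hFW : F ⊆ W
  · have h := r_mono hZ2 hF hW hFW
    have : (0:ℤ) ≤ ((F \ W).ncard : ℤ) := Int.ofNat_nonneg _
    omega
  · have := L1s hE hZE hjoin hmeet hZ2 hZ3 hF hW hFW
    omega

lemma exists_tight (hE : E.Finite) (hI : Ind E Z r I) (he : e ∈ E)
    (hnot : ¬ Ind E Z r (insert e I)) :
    ∃ W ∈ Z, e ∈ W ∧ ((I ∩ W).ncard : ℤ) = r W := by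
  simp only [Ind, not_and, not_forall] at hnot
  obtain ⟨W, hW, hgt⟩ := hnot (insert_subset he hI.1)
  push_neg at hgt
  have h1 : ((I ∩ W).ncard : ℤ) ≤ r W := hI.2 W hW
  have heW : e ∈ W := by
    by_contra heW
    have : insert e I ∩ W = I ∩ W := by
      ext z; simp only [mem_inter_iff, mem_insert_iff]
      constructor
      · rintro ⟨rfl | hz, hzW⟩
        · exact absurd hzW heW
        · exact ⟨hz, hzW⟩
      · rintro ⟨hz, hzW⟩; exact ⟨Or.inr hz, hzW⟩
    rw [this] at hgt
    omega
  have hsub : insert e I ∩ W ⊆ insert e (I ∩ W) := by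
    rintro z ⟨hz, hzW⟩
    rcases hz with rfl | hz
    · exact mem_insert _ _
    · exact mem_insert_of_mem _ ⟨hz, hzW⟩
  have hfin : (insert e (I ∩ W)).Finite := ((hE.subset hI.1).inter_of_left _).insert e
  have hle : (insert e I ∩ W).ncard ≤ (I ∩ W).ncard + 1 :=
    le_trans (Set.ncard_le_ncard hsub hfin) (Set.ncard_insert_le _ _)
  refine ⟨W, hW, heW, ?_⟩
  omega

lemma tight_join (hE : E.Finite)
    (hZ3 : ∀ X ∈ Z, ∀ Y ∈ Z, ∀ J m, IsLeast {W ∈ Z | X ⊆ W ∧ Y ⊆ W} J →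
        IsGreatest {W ∈ Z | W ⊆ X ∧ W ⊆ Y} m →
        r X + r Y ≥ r J + r m + (((X ∩ Y) \ m).ncard : ℤ))
    (hmeet : ∀ X ∈ Z, ∀ Y ∈ Z, ∃ m, IsGreatest {W ∈ Z | W ⊆ X ∧ W ⊆ Y} m)
    (hZE : ∀ X ∈ Z, X ⊆ E)
    (hI : Ind E Z r I) {W₁ W₂ : Set α} (hW₁ : W₁ ∈ Z) (hW₂ : W₂ ∈ Z)
    (ht₁ : ((I ∩ W₁).ncard : ℤ) = r W₁) (ht₂ : ((I ∩ W₂).ncard : ℤ) = r W₂)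
    (hJ : IsLeast {W ∈ Z | W₁ ⊆ W ∧ W₂ ⊆ W} J) :
    ((I ∩ J).ncard : ℤ) = r J := by
  obtain ⟨m, hm⟩ := hmeet W₁ hW₁ W₂ hW₂
  have hIfin : I.Finite := hE.subset hI.1
  have hab : (I ∩ (W₁ ∪ W₂)).ncard + (I ∩ (W₁ ∩ W₂)).ncard
      = (I ∩ W₁).ncard + (I ∩ W₂).ncard := by
    have h1 : (I ∩ W₁) ∪ (I ∩ W₂) = I ∩ (W₁ ∪ W₂) := (inter_union_distrib_left _ _ _).symm
    have h2 : (I ∩ W₁) ∩ (I ∩ W₂) = I ∩ (W₁ ∩ W₂) := by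
      ext z; simp only [mem_inter_iff]; tauto
    rw [← h1, ← h2]
    exact Set.ncard_union_add_ncard_inter _ _ (hIfin.inter_of_left _) (hIfin.inter_of_left _)
  have ha : (I ∩ (W₁ ∪ W₂)).ncard ≤ (I ∩ J).ncard :=
    Set.ncard_le_ncard (inter_subset_inter_right _ (union_subset hJ.1.2.1 hJ.1.2.2))
      (hIfin.inter_of_left _)
  have hb : (I ∩ (W₁ ∩ W₂)).ncard ≤ (I ∩ m).ncard + ((W₁ ∩ W₂) \ m).ncard := by
    have hsub : I ∩ (W₁ ∩ W₂) ⊆ (I ∩ m) ∪ ((W₁ ∩ W₂) \ m) := by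
      rintro z ⟨hzI, hzW⟩
      by_cases hzm : z ∈ m
      · exact Or.inl ⟨hzI, hzm⟩
      · exact Or.inr ⟨hzW, hzm⟩
    calc (I ∩ (W₁ ∩ W₂)).ncard ≤ ((I ∩ m) ∪ ((W₁ ∩ W₂) \ m)).ncard :=
          Set.ncard_le_ncard hsub ((hIfin.inter_of_left _).union
            ((hE.subset (inter_subset_left.trans (hZE W₁ hW₁))).diff))
      _ ≤ (I ∩ m).ncard + ((W₁ ∩ W₂) \ m).ncard := Set.ncard_union_le _ _
  have hIm : ((I ∩ m).ncard : ℤ) ≤ r m := hI.2 m hm.1.1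
  have hIJ : ((I ∩ J).ncard : ℤ) ≤ r J := hI.2 J hJ.1.1
  have h3 := hZ3 W₁ hW₁ W₂ hW₂ J m hJ hm
  omega

lemma tight_family (hE : E.Finite)
    (hjoin : ∀ X ∈ Z, ∀ Y ∈ Z, ∃ J, IsLeast {W ∈ Z | X ⊆ W ∧ Y ⊆ W} J)
    (hmeet : ∀ X ∈ Z, ∀ Y ∈ Z, ∃ m, IsGreatest {W ∈ Z | W ⊆ X ∧ W ⊆ Y} m)
    (hZ3 : ∀ X ∈ Z, ∀ Y ∈ Z, ∀ J m, IsLeast {W ∈ Z | X ⊆ W ∧ Y ⊆ W} J →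
        IsGreatest {W ∈ Z | W ⊆ X ∧ W ⊆ Y} m →
        r X + r Y ≥ r J + r m + (((X ∩ Y) \ m).ncard : ℤ))
    (hZE : ∀ X ∈ Z, X ⊆ E) (hI : Ind E Z r I) :
    ∀ S : Set (Set α), S.Finite → S ⊆ Z → S.Nonempty →
      (∀ s ∈ S, ((I ∩ s).ncard : ℤ) = r s) →
      ∃ T ∈ Z, ((I ∩ T).ncard : ℤ) = r T ∧ ∀ s ∈ S, s ⊆ T := by
  intro S hSfin
  refine Set.Finite.induction_on
    (motive := fun S _ => S ⊆ Z → S.Nonempty → (∀ s ∈ S, ((I ∩ s).ncard : ℤ) = r s) →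
      ∃ T ∈ Z, ((I ∩ T).ncard : ℤ) = r T ∧ ∀ s ∈ S, s ⊆ T)
    _ hSfin (fun _ h ↦ absurd h (by simp)) ?_
  · intro a S haS hSfin ih hsub hne htight
    have haZ : a ∈ Z := hsub (mem_insert a S)
    have hta : ((I ∩ a).ncard : ℤ) = r a := htight a (mem_insert a S)
    rcases S.eq_empty_or_nonempty with rfl | hSne
    · exact ⟨a, haZ, hta, by simp⟩
    · obtain ⟨T', hT'Z, hT't, hT'⟩ := ih (subset_trans (subset_insert a S) hsub) hSne
        (fun s hs ↦ htight s (mem_insert_of_mem a hs))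
      obtain ⟨T, hT⟩ := hjoin a haZ T' hT'Z
      refine ⟨T, hT.1.1, tight_join hE hZ3 hmeet hZE hI haZ hT'Z hta hT't hT, fun s hs ↦ ?_⟩
      rcases mem_insert_iff.1 hs with rfl | hs
      · exact hT.1.2.1
      · exact (hT' s hs).trans hT.1.2.2

lemma ind_aug (hE : E.Finite) (hZE : ∀ X ∈ Z, X ⊆ E)
    (hjoin : ∀ X ∈ Z, ∀ Y ∈ Z, ∃ J, IsLeast {W ∈ Z | X ⊆ W ∧ Y ⊆ W} J)
    (hmeet : ∀ X ∈ Z, ∀ Y ∈ Z, ∃ m, IsGreatest {W ∈ Z | W ⊆ X ∧ W ⊆ Y} m)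
    (hZ3 : ∀ X ∈ Z, ∀ Y ∈ Z, ∀ J m, IsLeast {W ∈ Z | X ⊆ W ∧ Y ⊆ W} J →
        IsGreatest {W ∈ Z | W ⊆ X ∧ W ⊆ Y} m →
        r X + r Y ≥ r J + r m + (((X ∩ Y) \ m).ncard : ℤ))
    (hI : Ind E Z r I) (hJ : Ind E Z r J) (hcard : I.ncard < J.ncard) :
    ∃ e ∈ J, e ∉ I ∧ Ind E Z r (insert e I) := by
  by_contra hcon
  push_neg at hcon
  have hIfin : I.Finite := hE.subset hI.1
  have hJfin : J.Finite := hE.subset hJ.1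
  have hJIne : (J \ I).Nonempty := by
    rcases (J \ I).eq_empty_or_nonempty with h | h
    · exfalso
      have : J ⊆ I := fun z hz ↦ by
        by_contra hzI
        exact (eq_empty_iff_forall_notMem.1 h z) ⟨hz, hzI⟩
      have := Set.ncard_le_ncard this hIfin
      omega
    · exact h
  -- for each e in J \ I pick a tight set containing e
  have hchoice : ∀ e ∈ J \ I, ∃ W ∈ Z, e ∈ W ∧ ((I ∩ W).ncard : ℤ) = r W := by
    rintro e ⟨heJ, heI⟩
    exact exists_tight hE hI (hJ.1 heJ) (hcon e heJ heI)
  choose! f hfZ hfmem hftight using hchoice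
  set S : Set (Set α) := f '' (J \ I) with hS
  have hSfin : S.Finite := (hJfin.diff).image f
  have hSsub : S ⊆ Z := by rintro W ⟨e, he, rfl⟩; exact hfZ e he
  have hSne : S.Nonempty := hJIne.image f
  have hStight : ∀ s ∈ S, ((I ∩ s).ncard : ℤ) = r s := by
    rintro W ⟨e, he, rfl⟩; exact hftight e he
  obtain ⟨T, hTZ, hTt, hTub⟩ :=
    tight_family hE hjoin hmeet hZ3 hZE hI S hSfin hSsub hSne hStight
  have hJIT : J \ I ⊆ T := fun e he ↦ hTub (f e) (mem_image_of_mem f he) (hfmem e he)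
  have hJT : (J ∩ T).ncard ≤ (I ∩ T).ncard := by
    have h1 : ((J ∩ T).ncard : ℤ) ≤ r T := hJ.2 T hTZ
    omega
  have hJTd : J \ T ⊆ I \ T := by
    rintro z ⟨hzJ, hzT⟩
    refine ⟨?_, hzT⟩
    by_contra hzI
    exact hzT (hJIT ⟨hzJ, hzI⟩)
  have hJTd' : (J \ T).ncard ≤ (I \ T).ncard := Set.ncard_le_ncard hJTd (hIfin.diff)
  have hJsplit : (J ∩ T).ncard + (J \ T).ncard = J.ncard := by
    rw [← Set.ncard_union_eq (disjoint_of_subset_left inter_subset_right disjoint_sdiff_right)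
      (hJfin.inter_of_left _) (hJfin.diff), inter_union_diff]
  have hIsplit : (I ∩ T).ncard + (I \ T).ncard = I.ncard := by
    rw [← Set.ncard_union_eq (disjoint_of_subset_left inter_subset_right disjoint_sdiff_right)
      (hIfin.inter_of_left _) (hIfin.diff), inter_union_diff]
  omega

theorem backward_dir (E : Set α) (hE : E.Finite)
    (Z : Set (Set α)) (hZE : ∀ X ∈ Z, X ⊆ E) (r : Set α → ℤ)
    (hne : Z.Nonempty)
    (hjoin : ∀ X ∈ Z, ∀ Y ∈ Z, ∃ J, IsLeast {W ∈ Z | X ⊆ W ∧ Y ⊆ W} J)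
    (hmeet : ∀ X ∈ Z, ∀ Y ∈ Z, ∃ m, IsGreatest {W ∈ Z | W ⊆ X ∧ W ⊆ Y} m)
    (hZ1 : ∀ B, IsLeast Z B → r B = 0)
    (hZ2 : ∀ X ∈ Z, ∀ Y ∈ Z, X ⊂ Y → 0 < r Y - r X ∧ r Y - r X < ((Y \ X).ncard : ℤ))
    (hZ3 : ∀ X ∈ Z, ∀ Y ∈ Z, ∀ J m, IsLeast {W ∈ Z | X ⊆ W ∧ Y ⊆ W} J →
        IsGreatest {W ∈ Z | W ⊆ X ∧ W ⊆ Y} m →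
        r X + r Y ≥ r J + r m + (((X ∩ Y) \ m).ncard : ℤ)) :
    ∃ M : Matroid α, M.E = E ∧ {F | M.CyclicFlat F} = Z ∧
        ∀ X ∈ Z, (M.rk X : ℤ) = r X := by
  have hZfin : Z.Finite := hE.finite_subsets.subset (fun X hX ↦ hZE X hX)
  obtain ⟨B, hB⟩ := exists_least_of_meets hne hZfin hmeet
  have hnn : ∀ W ∈ Z, 0 ≤ r W := fun W hW ↦ r_nonneg hB hZ1 hZ2 hW
  have hempty : Ind E Z r ∅ := ⟨empty_subset E, fun W hW ↦ by simpa using hnn W hW⟩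
  have hsubset : ∀ ⦃A B' : Set α⦄, Ind E Z r B' → A ⊆ B' → Ind E Z r A := by
    intro A B' hB' hAB
    refine ⟨hAB.trans hB'.1, fun W hW ↦ le_trans ?_ (hB'.2 W hW)⟩
    exact_mod_cast Set.ncard_le_ncard (inter_subset_inter_left _ hAB)
      ((hE.subset hB'.1).inter_of_left _)
  set M0 : Matroid α := (IndepMatroid.ofFinite hE (Ind E Z r) hempty hsubset
    (fun I J hI hJ hc ↦ ind_aug hE hZE hjoin hmeet hZ3 hI hJ hc)
    (fun I hI ↦ hI.1)).matroid with hM0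
  have hM0E : M0.E = E := by simp [hM0]
  have hInd : ∀ {A : Set α}, M0.Indep A ↔ Ind E Z r A := fun {A} ↦ by
    simp [hM0]
  have hEfin' : M0.E.Finite := hM0E ▸ hE
  -- upper bound on independent subsets
  have hub : ∀ {A I W : Set α}, M0.IsBasis I A → W ∈ Z →
      (I.ncard : ℤ) ≤ r W + ((A \ W).ncard : ℤ) := by
    intro A I W hIA hW
    have hIi : Ind E Z r I := hInd.1 hIA.indep
    have hIfin : I.Finite := hE.subset hIi.1
    have hAfin : A.Finite := hEfin'.subset hIA.subset_ground
    have hsplit : (I ∩ W).ncard + (I \ W).ncard = I.ncard := by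
      rw [← Set.ncard_union_eq (disjoint_of_subset_left inter_subset_right disjoint_sdiff_right)
        (hIfin.inter_of_left _) (hIfin.diff), inter_union_diff]
    have h1 : ((I ∩ W).ncard : ℤ) ≤ r W := hIi.2 W hW
    have h2 : (I \ W).ncard ≤ (A \ W).ncard :=
      Set.ncard_le_ncard (diff_subset_diff_left hIA.subset) (hAfin.diff)
    omega
  -- a basis meets some member of Z with equality
  have hlbmax : ∀ {A I : Set α}, M0.IsBasis I A →
      ∃ W ∈ Z, r W + ((A \ W).ncard : ℤ) ≤ I.ncard := by
    intro A I hIA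
    have hIi : Ind E Z r I := hInd.1 hIA.indep
    have hIfin : I.Finite := hE.subset hIi.1
    have hAE : A ⊆ E := hM0E ▸ hIA.subset_ground
    have hAfin : A.Finite := hE.subset hAE
    by_cases hAI : A ⊆ I
    · have hIA' : I = A := subset_antisymm hIA.subset hAI
      refine ⟨B, hB.1, ?_⟩
      have h0 := hZ1 B hB
      have h1 : (A \ B).ncard ≤ A.ncard := Set.ncard_le_ncard diff_subset hAfin
      rw [hIA']
      omega
    · have hne' : (A \ I).Nonempty := by
        rw [not_subset] at hAI
        obtain ⟨x, hxA, hxI⟩ := hAI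
        exact ⟨x, hxA, hxI⟩
      have hchoice : ∀ e ∈ A \ I, ∃ W ∈ Z, e ∈ W ∧ ((I ∩ W).ncard : ℤ) = r W := by
        rintro e ⟨heA, heI⟩
        have hdep : M0.Dep (insert e I) := hIA.insert_dep ⟨heA, heI⟩
        have hnot : ¬ Ind E Z r (insert e I) := fun h ↦ hdep.not_indep (hInd.2 h)
        exact exists_tight hE hIi (hAE heA) hnot
      choose! f hfZ hfmem hftight using hchoice
      obtain ⟨T, hTZ, hTt, hTub⟩ := tight_family hE hjoin hmeet hZ3 hZE hIi
        (f '' (A \ I)) ((hAfin.diff).image f)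
        (by rintro W ⟨e, he, rfl⟩; exact hfZ e he) (hne'.image f)
        (by rintro W ⟨e, he, rfl⟩; exact hftight e he)
      have hAIT : A \ I ⊆ T := fun e he ↦ hTub (f e) (mem_image_of_mem f he) (hfmem e he)
      have hATd : A \ T ⊆ I \ T := by
        rintro z ⟨hzA, hzT⟩
        refine ⟨?_, hzT⟩
        by_contra hzI
        exact hzT (hAIT ⟨hzA, hzI⟩)
      have h2 : (A \ T).ncard ≤ (I \ T).ncard := Set.ncard_le_ncard hATd (hIfin.diff)
      have hsplit : (I ∩ T).ncard + (I \ T).ncard = I.ncard := by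
        rw [← Set.ncard_union_eq (disjoint_of_subset_left inter_subset_right disjoint_sdiff_right)
          (hIfin.inter_of_left _) (hIfin.diff), inter_union_diff]
      exact ⟨T, hTZ, by omega⟩
  -- rank equality on Z
  have hrk : ∀ X ∈ Z, (M0.rk X : ℤ) = r X := by
    intro X hX
    have hXE : X ⊆ M0.E := hM0E ▸ hZE X hX
    obtain ⟨I, hI⟩ := M0.exists_isBasis X hXE
    rw [Matroid.rk_basis hEfin' hI]
    have hIi : Ind E Z r I := hInd.1 hI.indep
    have hIX : I ∩ X = I := inter_eq_self_of_subset_left hI.subset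
    have h1 : (I.ncard : ℤ) ≤ r X := by have := hIi.2 X hX; rwa [hIX] at this
    obtain ⟨W, hW, h2⟩ := hlbmax hI
    have h3 := L1 hE hZE hjoin hmeet hZ2 hZ3 hX hW
    omega
  -- every member of Z is a cyclic flat
  have hZCF : ∀ F ∈ Z, M0.CyclicFlat F := by
    intro F hF
    have hFE : F ⊆ E := hZE F hF
    have hFE' : F ⊆ M0.E := hM0E ▸ hFE
    have hFfin : F.Finite := hE.subset hFE
    constructor
    · -- Flat
      refine Matroid.flat_of_closure_subset ?_ hFE'
      intro e he
      by_contra heF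
      have heE : e ∈ M0.E := M0.closure_subset_ground F he
      obtain ⟨I, hI⟩ := M0.exists_isBasis F hFE'
      have heI : e ∈ M0.closure I := by rwa [hI.closure_eq_closure]
      have henI : e ∉ I := fun h ↦ heF (hI.subset h)
      have hIi : Ind E Z r I := hInd.1 hI.indep
      have hIfin : I.Finite := hE.subset hIi.1
      have hins : M0.Indep (insert e I) := by
        refine hInd.2 ⟨insert_subset (hM0E ▸ heE) hIi.1, fun W hW ↦ ?_⟩
        by_cases heW : e ∈ W
        · -- strict bound
          obtain ⟨m, hm⟩ := hmeet F hF W hW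
          obtain ⟨Jn, hJn⟩ := hjoin F hF W hW
          have hFJn : F ⊂ Jn := ssubset_of_subset_of_ne hJn.1.2.1
            (fun h ↦ heF (h ▸ hJn.1.2.2 heW))
          have h2 := (hZ2 F hF Jn hJn.1.1 hFJn).1
          have h3 := hZ3 F hF W hW Jn m hJn hm
          have hIm : ((I ∩ m).ncard : ℤ) ≤ r m := hIi.2 m hm.1.1
          have hcov : I ∩ W ⊆ (I ∩ m) ∪ ((F ∩ W) \ m) := by
            rintro z ⟨hzI, hzW⟩
            by_cases hzm : z ∈ m
            · exact Or.inl ⟨hzI, hzm⟩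
            · exact Or.inr ⟨⟨hI.subset hzI, hzW⟩, hzm⟩
          have hc1 : (I ∩ W).ncard ≤ (I ∩ m).ncard + ((F ∩ W) \ m).ncard :=
            le_trans (Set.ncard_le_ncard hcov ((hIfin.inter_of_left _).union
              ((hFfin.inter_of_left _).diff))) (Set.ncard_union_le _ _)
          have hc2 : (insert e I ∩ W).ncard ≤ (I ∩ W).ncard + 1 := by
            have hsub2 : insert e I ∩ W ⊆ insert e (I ∩ W) := by
              rintro z ⟨hz, hzW⟩
              rcases hz with rfl | hz
              · exact mem_insert _ _
              · exact mem_insert_of_mem _ ⟨hz, hzW⟩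
            exact le_trans (Set.ncard_le_ncard hsub2 ((hIfin.inter_of_left _).insert e))
              (Set.ncard_insert_le _ _)
          omega
        · rw [Set.insert_inter_of_notMem heW]
          exact hIi.2 W hW
      have := ((hI.indep.insert_indep_iff_of_notMem henI).1 hins).2
      exact this heI
    · -- cyclic
      intro x hx
      have hFxE : F \ {x} ⊆ M0.E := diff_subset.trans hFE'
      obtain ⟨I', hI'⟩ := M0.exists_isBasis (F \ {x}) hFxE
      have hI'i : Ind E Z r I' := hInd.1 hI'.indep
      have hI'F : I' ⊆ F := hI'.subset.trans diff_subset
      have hI'fin : I'.Finite := hE.subset hI'i.1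
      have hub' : (I'.ncard : ℤ) ≤ r F := by
        have := hI'i.2 F hF
        rwa [inter_eq_self_of_subset_left hI'F] at this
      have hlb' : r F ≤ (I'.ncard : ℤ) := by
        obtain ⟨W, hW, h2⟩ := hlbmax hI'
        by_cases hxW : x ∈ W
        · have hFW : (F \ {x}) \ W = F \ W := by
            ext z; simp only [mem_diff, mem_singleton_iff]
            constructor
            · rintro ⟨⟨hz, _⟩, hzW⟩; exact ⟨hz, hzW⟩
            · rintro ⟨hz, hzW⟩; exact ⟨⟨hz, fun h ↦ hzW (h ▸ hxW)⟩, hzW⟩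
          rw [hFW] at h2
          have := L1 hE hZE hjoin hmeet hZ2 hZ3 hF hW
          omega
        · have hFWne : ¬ F ⊆ W := fun h ↦ hxW (h hx)
          have hL := L1s hE hZE hjoin hmeet hZ2 hZ3 hF hW hFWne
          have hcard : (F \ W).ncard = ((F \ {x}) \ W).ncard + 1 := by
            have hins' : F \ W = insert x ((F \ {x}) \ W) := by
              ext z; simp only [mem_diff, mem_insert_iff, mem_singleton_iff]
              constructor
              · rintro ⟨hz, hzW⟩
                rcases eq_or_ne z x with rfl | hne'
                · exact Or.inl rfl
                · exact Or.inr ⟨⟨hz, hne'⟩, hzW⟩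
              · rintro (rfl | ⟨⟨hz, _⟩, hzW⟩)
                · exact ⟨hx, hxW⟩
                · exact ⟨hz, hzW⟩
            rw [hins', Set.ncard_insert_of_notMem (by simp) ((hFfin.diff).diff)]
          omega
      have hxI' : x ∉ I' := fun h ↦ (hI'.subset h).2 rfl
      have hdep : M0.Dep (insert x I') := by
        rw [Matroid.dep_iff]
        refine ⟨fun hind ↦ ?_, insert_subset (hFE' hx) hI'.indep.subset_ground⟩
        have hIi2 : Ind E Z r (insert x I') := hInd.1 hind
        have : insert x I' ∩ F = insert x I' :=
          inter_eq_self_of_subset_left (insert_subset hx hI'F)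
        have hle := hIi2.2 F hF
        rw [this, Set.ncard_insert_of_notMem hxI' hI'fin] at hle
        omega
      obtain ⟨C, hC, hCsub⟩ := hdep.exists_circuit_subset hEfin'
      have hxC : x ∈ C := by
        by_contra hxC
        refine hC.dep.not_indep (hI'.indep.subset fun z hz ↦ ?_)
        rcases hCsub hz with rfl | h
        · exact absurd hz hxC
        · exact h
      exact ⟨C, hC, hxC, hCsub.trans (insert_subset hx hI'F)⟩
  -- every cyclic flat is in Z
  have hCFZ : ∀ F, M0.CyclicFlat F → F ∈ Z := by
    rintro F ⟨hFflat, hFcyc⟩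
    have hFE' : F ⊆ M0.E := hFflat.subset_ground
    have hFE : F ⊆ E := hM0E ▸ hFE'
    have hFfin : F.Finite := hE.subset hFE
    obtain ⟨I, hI⟩ := M0.exists_isBasis F hFE'
    have hIfin : I.Finite := hE.subset (hM0E ▸ hI.indep.subset_ground)
    obtain ⟨W, hW, hWmin⟩ := hlbmax hI
    have hWE : W ⊆ E := hZE W hW
    have hFW : F ⊆ W := by
      by_contra hFWn
      rw [not_subset] at hFWn
      obtain ⟨x, hxF, hxW⟩ := hFWn
      obtain ⟨C, hC, hxC, hCF⟩ := hFcyc x hxF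
      obtain ⟨I', hI'⟩ := M0.exists_isBasis (F \ {x}) (diff_subset.trans hFE')
      have hI'basisF : M0.IsBasis I' F := by
        rw [Matroid.isBasis_iff_indep_closure]
        refine ⟨hI'.indep, fun y hy ↦ ?_, hI'.subset.trans diff_subset⟩
        rcases eq_or_ne y x with rfl | hne'
        · have h1 : y ∈ M0.closure (C \ {y}) := hC.mem_closure_diff_singleton hxC
          have h2 : M0.closure (C \ {y}) ⊆ M0.closure (F \ {y}) :=
            M0.closure_subset_closure (diff_subset_diff_left hCF)
          rw [hI'.closure_eq_closure]
          exact h2 h1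
        · exact hI'.subset_closure ⟨hy, hne'⟩
      have hcardeq : I'.ncard = I.ncard := by
        have := hI'basisF.encard_eq_encard hI
        rw [Set.ncard_def, this, ← Set.ncard_def]
      have hub2 := hub hI' hW
      have hcard : (F \ W).ncard = ((F \ {x}) \ W).ncard + 1 := by
        have hins' : F \ W = insert x ((F \ {x}) \ W) := by
          ext z; simp only [mem_diff, mem_insert_iff, mem_singleton_iff]
          constructor
          · rintro ⟨hz, hzW⟩
            rcases eq_or_ne z x with rfl | hne'
            · exact Or.inl rfl
            · exact Or.inr ⟨⟨hz, hne'⟩, hzW⟩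
          · rintro (rfl | ⟨⟨hz, _⟩, hzW⟩)
            · exact ⟨hxF, hxW⟩
            · exact ⟨hz, hzW⟩
        rw [hins', Set.ncard_insert_of_notMem (by simp) ((hFfin.diff).diff)]
      rw [hcardeq] at hub2
      omega
    have hFWd : F \ W = ∅ := by rw [diff_eq_empty]; exact hFW
    have hIW : (I.ncard : ℤ) = r W := by
      have h1 := hub hI hW
      rw [hFWd] at h1 hWmin
      simp only [Set.ncard_empty, Nat.cast_zero, add_zero] at h1 hWmin
      omega
    have hWF : W ⊆ F := by
      by_contra hWFn
      rw [not_subset] at hWFn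
      obtain ⟨e, heW, heF⟩ := hWFn
      have heE : e ∈ M0.E := hM0E ▸ hWE heW
      have henI : e ∉ I := fun h ↦ heF (hI.subset h)
      have hecl : e ∉ M0.closure I := by
        rw [hI.closure_eq_closure, hFflat.closure]
        exact heF
      have hins : M0.Indep (insert e I) := by
        rw [hI.indep.insert_indep_iff_of_notMem henI]
        exact ⟨heE, hecl⟩
      have hIi2 : Ind E Z r (insert e I) := hInd.1 hins
      have hsub2 : insert e I ⊆ W := insert_subset heW (hI.subset.trans hFW)
      have := hIi2.2 W hW
      rw [inter_eq_self_of_subset_left hsub2,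
        Set.ncard_insert_of_notMem henI hIfin] at this
      omega
    exact (subset_antisymm hFW hWF) ▸ hW
  exact ⟨M0, hM0E, Set.ext (fun F ↦ ⟨fun h ↦ hCFZ F h, fun h ↦ hZCF F h⟩), hrk⟩

end Construction

/-- Bonin–de Mier: a collection `Z` of subsets of a finite set `E`
together with an integer-valued function `r` on `Z` is the collection of cyclic flats of a
matroid on `E` with rank function restricting to `r` if and only if axioms (Z0)–(Z3) hold,
where joins and meets are taken in the lattice `(Z, ⊆)`. -/
theorem cyclicFlats_characterization {α : Type*} (E : Set α) (hE : E.Finite)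
    (Z : Set (Set α)) (hZE : ∀ X ∈ Z, X ⊆ E) (r : Set α → ℤ) :
    (∃ M : Matroid α, M.E = E ∧ {F | M.CyclicFlat F} = Z ∧
        ∀ X ∈ Z, (M.rk X : ℤ) = r X) ↔
      -- (Z0): `Z` is a lattice under inclusion
      ((Z.Nonempty ∧
        (∀ X ∈ Z, ∀ Y ∈ Z, ∃ J, IsLeast {W ∈ Z | X ⊆ W ∧ Y ⊆ W} J) ∧
        (∀ X ∈ Z, ∀ Y ∈ Z, ∃ m, IsGreatest {W ∈ Z | W ⊆ X ∧ W ⊆ Y} m)) ∧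
      -- (Z1): the minimum element of `Z` has rank `0`
      (∀ B, IsLeast Z B → r B = 0) ∧
      -- (Z2)
      (∀ X ∈ Z, ∀ Y ∈ Z, X ⊂ Y →
        0 < r Y - r X ∧ r Y - r X < ((Y \ X).ncard : ℤ)) ∧
      -- (Z3)
      (∀ X ∈ Z, ∀ Y ∈ Z, ∀ J m,
        IsLeast {W ∈ Z | X ⊆ W ∧ Y ⊆ W} J →
        IsGreatest {W ∈ Z | W ⊆ X ∧ W ⊆ Y} m →
        r X + r Y ≥ r J + r m + (((X ∩ Y) \ m).ncard : ℤ))) := by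
  constructor
  · exact forward_dir E hE Z hZE r
  · rintro ⟨⟨hne, hjoin, hmeet⟩, hZ1, hZ2, hZ3⟩
    exact backward_dir E hE Z hZE r hne hjoin hmeet hZ1 hZ2 hZ3
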